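/- arXiv:1207.1575 — 2 statements merged into one kernel-verified Lean document; each statement's English description precedes it below -/
import Mathlib

section
/- Let (ω¹, ω², ω³; I, J, K) be an (I,J,K)-generalized Finsler structure on a smooth 3-manifold Σ. Then: (1) (ω¹, ω²) is a taut contact circle if and only if I = 0 everywhere; in that case also J = 0 everywhere. (2) (ω¹, ω³) is a taut contact circle if and only if K = 1 everywhere; in that case (ω¹, ω³) is moreover a Cartan structure, i.e. additionally ω¹∧dω³ = 0 and ω³∧dω¹ = 0. (3) (ω², ω³) is a taut contact circle if and only if K = 1 and J = 0 everywhere; in that case also I = 0 everywhere. -/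
open Manifold

noncomputable section

/-- The model space `ℝ³` (as `EuclideanSpace ℝ (Fin 3)`). -/
abbrev E3 : Type := EuclideanSpace ℝ (Fin 3)

variable {S : Type*} [TopologicalSpace S] [ChartedSpace E3 S]

/-- The representation of a 1-form `ω` on `S` in the chart at `x`:
the pullback of `ω` by the inverse of the chart. -/
def chartRep (ω : S → E3 →L[ℝ] ℝ) (x : S) : E3 → (E3 →L[ℝ] ℝ) :=
  fun u => (ω ((chartAt E3 x).symm u)).comp
    (mfderiv (𝓡 3) (𝓡 3) (chartAt E3 x).symm u)

/-- A 1-form is smooth if its chart representations are smooth. -/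
def IsSmoothOneForm (ω : S → E3 →L[ℝ] ℝ) : Prop :=
  ∀ x : S, ContDiffOn ℝ (⊤ : ℕ∞) (chartRep ω x) (chartAt E3 x).target

/-- The exterior derivative of a 1-form, as a (pointwise alternating) 2-form,
computed in the chart at the given point. -/
def extd (ω : S → E3 →L[ℝ] ℝ) (x : S) (v w : E3) : ℝ :=
  fderiv ℝ (fun u => chartRep ω x u w) (chartAt E3 x x) v
    - fderiv ℝ (fun u => chartRep ω x u v) (chartAt E3 x x) w

/-- The differential of a function, as a 1-form. -/
def dFun (f : S → ℝ) (x : S) : E3 →L[ℝ] ℝ :=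
  mfderiv (𝓡 3) 𝓘(ℝ, ℝ) f x

/-- Smoothness for real valued functions on the 3-manifold. -/
def IsSmoothFunction (f : S → ℝ) : Prop :=
  ContMDiff (𝓡 3) 𝓘(ℝ, ℝ) (⊤ : ℕ∞) f

/-- Wedge product of two 1-forms, as a 2-form. -/
def wedge1 (ω η : S → E3 →L[ℝ] ℝ) (x : S) (v w : E3) : ℝ :=
  ω x v * η x w - ω x w * η x v

/-- Wedge product of a 1-form and an (alternating) 2-form, as a 3-form. -/
def wedge12 (a : S → E3 →L[ℝ] ℝ) (β : S → E3 → E3 → ℝ) (x : S) (u v w : E3) : ℝ :=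
  a x u * β x v w - a x v * β x u w + a x w * β x u v

/-- Wedge product of three 1-forms, as a 3-form. -/
def wedge3 (a b c : S → E3 →L[ℝ] ℝ) (x : S) (u v w : E3) : ℝ :=
  a x u * (b x v * c x w - b x w * c x v)
    - a x v * (b x u * c x w - b x w * c x u)
    + a x w * (b x u * c x v - b x v * c x u)

/-- A contact form: a smooth 1-form `α` with `α ∧ dα` nowhere vanishing. -/
def IsContactForm (a : S → E3 →L[ℝ] ℝ) : Prop :=
  IsSmoothOneForm a ∧ ∀ x : S, ∃ u v w : E3, wedge12 a (extd a) x u v w ≠ 0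

/-- A taut contact circle: a pair of contact forms all of whose unit circle linear
combinations are contact forms defining the same volume as `a`. -/
def IsTautContactCircle (a b : S → E3 →L[ℝ] ℝ) : Prop :=
  IsContactForm a ∧ IsContactForm b ∧
    ∀ l1 l2 : ℝ, l1 ^ 2 + l2 ^ 2 = 1 →
      IsContactForm (fun x => l1 • a x + l2 • b x) ∧
        ∀ x u v w, wedge12 (fun x => l1 • a x + l2 • b x)
            (extd (fun x => l1 • a x + l2 • b x)) x u v w
          = wedge12 a (extd a) x u v w

/-- A Cartan structure: a pair of contact forms with `α¹∧dα¹ = α²∧dα²` (nowhere zero) and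
`α¹∧dα² = 0 = α²∧dα¹`. -/
def IsCartanStructure (a b : S → E3 →L[ℝ] ℝ) : Prop :=
  IsContactForm a ∧ IsContactForm b ∧
    (∀ x u v w, wedge12 a (extd a) x u v w = wedge12 b (extd b) x u v w) ∧
    (∀ x u v w, wedge12 a (extd b) x u v w = 0) ∧
    (∀ x u v w, wedge12 b (extd a) x u v w = 0)

/-- A `𝒦`-Cartan structure: a coframing `(α¹, α², α³)` with
`dα¹ = α²∧α³`, `dα² = α³∧α¹`, `dα³ = 𝒦 α¹∧α²`. -/
def IsKCartanStructure (a1 a2 a3 : S → E3 →L[ℝ] ℝ) (K : S → ℝ) : Prop :=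
  IsSmoothOneForm a1 ∧ IsSmoothOneForm a2 ∧ IsSmoothOneForm a3 ∧ IsSmoothFunction K ∧
    (∀ x : S, LinearIndependent ℝ ![a1 x, a2 x, a3 x]) ∧
    (∀ x v w, extd a1 x v w = wedge1 a2 a3 x v w) ∧
    (∀ x v w, extd a2 x v w = wedge1 a3 a1 x v w) ∧
    (∀ x v w, extd a3 x v w = K x * wedge1 a1 a2 x v w)

/-- An `(I,J,K)`-generalized Finsler structure: a coframing `(ω¹, ω², ω³)` together with
smooth functions `I, J, K` satisfying
`dω¹ = −I ω¹∧ω³ + ω²∧ω³`, `dω² = −ω¹∧ω³`, `dω³ = K ω¹∧ω² − J ω¹∧ω³`. -/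
def IsGeneralizedFinslerStructure (ω1 ω2 ω3 : S → E3 →L[ℝ] ℝ) (I J K : S → ℝ) : Prop :=
  IsSmoothOneForm ω1 ∧ IsSmoothOneForm ω2 ∧ IsSmoothOneForm ω3 ∧
    IsSmoothFunction I ∧ IsSmoothFunction J ∧ IsSmoothFunction K ∧
    (∀ x : S, LinearIndependent ℝ ![ω1 x, ω2 x, ω3 x]) ∧
    (∀ x v w, extd ω1 x v w = -(I x) * wedge1 ω1 ω3 x v w + wedge1 ω2 ω3 x v w) ∧
    (∀ x v w, extd ω2 x v w = -wedge1 ω1 ω3 x v w) ∧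
    (∀ x v w, extd ω3 x v w = K x * wedge1 ω1 ω2 x v w - J x * wedge1 ω1 ω3 x v w)



section Aux

lemma exists_dual_triple (f g h : E3 →L[ℝ] ℝ) (hli : LinearIndependent ℝ ![f, g, h]) :
    ∃ u v w : E3, (f u = 1 ∧ g u = 0 ∧ h u = 0) ∧ (f v = 0 ∧ g v = 1 ∧ h v = 0)
      ∧ (f w = 0 ∧ g w = 0 ∧ h w = 1) := by
  have hinj : LinearMap.ker (ContinuousLinearMap.coeLM ℝ : (E3 →L[ℝ] ℝ) →ₗ[ℝ] (E3 →ₗ[ℝ] ℝ)) = ⊥ :=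
    LinearMap.ker_eq_bot.mpr (fun a b hab => ContinuousLinearMap.coe_injective hab)
  have hli2 : LinearIndependent ℝ
      (⇑(ContinuousLinearMap.coeLM ℝ : (E3 →L[ℝ] ℝ) →ₗ[ℝ] (E3 →ₗ[ℝ] ℝ)) ∘ ![f, g, h]) :=
    hli.map' _ hinj
  have hcard : Fintype.card (Fin 3) = Module.finrank ℝ (Module.Dual ℝ E3) := by
    rw [Subspace.dual_finrank_eq, finrank_euclideanSpace, Fintype.card_fin]
  let B : Module.Basis (Fin 3) ℝ (Module.Dual ℝ E3) := basisOfLinearIndependentOfCardEqFinrank hli2 hcard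
  have hB : ∀ i, B i = (⇑(ContinuousLinearMap.coeLM ℝ) ∘ ![f, g, h]) i := by
    intro i; rw [show B = _ from rfl, coe_basisOfLinearIndependentOfCardEqFinrank]
  let U : Fin 3 → E3 := fun i => (Module.evalEquiv ℝ E3).symm (B.coord i)
  have key : ∀ i j : Fin 3, (B j) (U i) = if i = j then 1 else 0 := by
    intro i j
    have h2 := Module.apply_evalEquiv_symm_apply ℝ E3 (B j) (B.coord i)
    show (B j) ((Module.evalEquiv ℝ E3).symm (B.coord i)) = _
    rw [h2, Module.Basis.coord_apply, B.repr_self]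
    simp [Finsupp.single_apply, eq_comm]
  have key2 : ∀ i j : Fin 3, (![f, g, h] j) (U i) = if i = j then 1 else 0 := by
    intro i j
    have := key i j
    rw [hB j] at this
    simpa using this
  exact ⟨U 0, U 1, U 2,
    ⟨key2 0 0, key2 0 1, key2 0 2⟩, ⟨key2 1 0, key2 1 1, key2 1 2⟩,
    ⟨key2 2 0, key2 2 1, key2 2 2⟩⟩

lemma two_le_winfty : (2 : WithTop ℕ∞) ≤ ((⊤ : ℕ∞) : WithTop ℕ∞) := by
  rw [show ((2:WithTop ℕ∞)) = ((2:ℕ∞) : WithTop ℕ∞) by rfl, WithTop.coe_le_coe]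
  exact le_top

lemma add_one_le_winfty : ((1:WithTop ℕ∞)+1) ≤ ((⊤ : ℕ∞) : WithTop ℕ∞) := by
  have : ((1:WithTop ℕ∞)+1) = 2 := by norm_num
  rw [this]; exact two_le_winfty

variable [IsManifold (𝓡 3) (⊤ : ℕ∞) S]

lemma mfderiv_chart_symm (x0 : S) {p : E3} (hp : p ∈ (chartAt E3 x0).target) :
    mfderiv (𝓡 3) (𝓡 3) (chartAt E3 x0).symm p
      = fderiv ℝ (↑(chartAt E3 ((chartAt E3 x0).symm p)) ∘ ↑(chartAt E3 x0).symm) p := by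
  have hmd : MDifferentiableAt (𝓡 3) (𝓡 3) (chartAt E3 x0).symm p :=
    mdifferentiableAt_atlas_symm (chart_mem_atlas E3 x0) hp
  rw [MDifferentiableAt.mfderiv hmd]
  simp [writtenInExtChartAt, extChartAt, fderivWithin_univ, Function.comp, chartAt_self_eq]
  rfl

lemma chartRep_center (ω : S → E3 →L[ℝ] ℝ) (x0 : S) :
    chartRep ω x0 (chartAt E3 x0 x0) = ω x0 := by
  have hmem : chartAt E3 x0 x0 ∈ (chartAt E3 x0).target :=
    (chartAt E3 x0).map_source (mem_chart_source E3 x0)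
  have hsymm : (chartAt E3 x0).symm (chartAt E3 x0 x0) = x0 :=
    (chartAt E3 x0).left_inv (mem_chart_source E3 x0)
  have h1 := mfderiv_chart_symm x0 hmem
  rw [hsymm] at h1
  have h2 : (↑(chartAt E3 x0) ∘ ↑(chartAt E3 x0).symm)
      =ᶠ[nhds (chartAt E3 x0 x0)] id := by
    filter_upwards [(chartAt E3 x0).open_target.mem_nhds hmem] with q hq
    exact (chartAt E3 x0).right_inv hq
  have h3 : fderiv ℝ (↑(chartAt E3 x0) ∘ ↑(chartAt E3 x0).symm) (chartAt E3 x0 x0)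
      = ContinuousLinearMap.id ℝ E3 := by
    rw [h2.fderiv_eq, fderiv_id]
  unfold chartRep
  rw [hsymm, h1, h3, ContinuousLinearMap.comp_id]

lemma psi_contDiffAt (x0 y : S) {q : E3} (hq1 : q ∈ (chartAt E3 x0).target)
    (hq2 : (chartAt E3 x0).symm q ∈ (chartAt E3 y).source) :
    ContDiffAt ℝ (⊤ : ℕ∞) (↑(chartAt E3 y) ∘ ↑(chartAt E3 x0).symm) q := by
  have h := contDiffOn_ext_coord_change (I := 𝓡 3) (n := ((⊤ : ℕ∞) : WithTop ℕ∞)) y x0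
  have hsrc : ((extChartAt (𝓡 3) x0).symm ≫ extChartAt (𝓡 3) y).source
      = (chartAt E3 x0).target ∩ ↑(chartAt E3 x0).symm ⁻¹' (chartAt E3 y).source := by
    simp [PartialEquiv.trans_source, extChartAt, OpenPartialHomeomorph.extend]
  have hfun : (↑(extChartAt (𝓡 3) y) ∘ ↑(extChartAt (𝓡 3) x0).symm)
      = (↑(chartAt E3 y) ∘ ↑(chartAt E3 x0).symm) := by
    funext q; simp [extChartAt, OpenPartialHomeomorph.extend]
  have hopen : IsOpen ((chartAt E3 x0).target ∩ ↑(chartAt E3 x0).symm ⁻¹' (chartAt E3 y).source) :=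
    (chartAt E3 x0).continuousOn_symm.isOpen_inter_preimage
      (chartAt E3 x0).open_target (chartAt E3 y).open_source
  rw [hsrc, hfun] at h
  exact h.contDiffAt (hopen.mem_nhds ⟨hq1, hq2⟩)

lemma mfderiv_symm_chain_apply (x0 y : S) {q : E3}
    (hq1 : q ∈ (chartAt E3 x0).target) (hq2 : (chartAt E3 x0).symm q ∈ (chartAt E3 y).source)
    (v : E3) :
    mfderiv (𝓡 3) (𝓡 3) (chartAt E3 x0).symm q v
      = mfderiv (𝓡 3) (𝓡 3) (chartAt E3 y).symm
          ((↑(chartAt E3 y) ∘ ↑(chartAt E3 x0).symm) q)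
          (fderiv ℝ (↑(chartAt E3 y) ∘ ↑(chartAt E3 x0).symm) q v) := by
  set ψ : E3 → E3 := ↑(chartAt E3 y) ∘ ↑(chartAt E3 x0).symm with hψ
  have hopen : IsOpen ((chartAt E3 x0).target ∩ ↑(chartAt E3 x0).symm ⁻¹' (chartAt E3 y).source) :=
    (chartAt E3 x0).continuousOn_symm.isOpen_inter_preimage
      (chartAt E3 x0).open_target (chartAt E3 y).open_source
  have hev : (↑(chartAt E3 y).symm ∘ ψ) =ᶠ[nhds q] ↑(chartAt E3 x0).symm := by
    filter_upwards [hopen.mem_nhds ⟨hq1, hq2⟩] with q' hq'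
    exact (chartAt E3 y).left_inv hq'.2
  have hg : MDifferentiableAt (𝓡 3) (𝓡 3) (↑(chartAt E3 y).symm) (ψ q) :=
    mdifferentiableAt_atlas_symm (chart_mem_atlas E3 y)
      ((chartAt E3 y).map_source hq2)
  have hf : MDifferentiableAt (𝓡 3) (𝓡 3) ψ q :=
    ((psi_contDiffAt x0 y hq1 hq2).differentiableAt
      (by simp)).mdifferentiableAt
  have h2 : mfderiv (𝓡 3) (𝓡 3) (chartAt E3 x0).symm q
      = mfderiv (𝓡 3) (𝓡 3) (↑(chartAt E3 y).symm ∘ ψ) q := (hev.mfderiv_eq).symm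
  have hcomp := mfderiv_comp q hg hf
  rw [h2, hcomp, ← mfderiv_eq_fderiv]
  rfl

lemma chartRep_pullback (ω : S → E3 →L[ℝ] ℝ) (x0 y : S) {q : E3}
    (hq1 : q ∈ (chartAt E3 x0).target) (hq2 : (chartAt E3 x0).symm q ∈ (chartAt E3 y).source) :
    chartRep ω x0 q
      = (chartRep ω y ((↑(chartAt E3 y) ∘ ↑(chartAt E3 x0).symm) q)).comp
          (fderiv ℝ (↑(chartAt E3 y) ∘ ↑(chartAt E3 x0).symm) q) := by
  set ψ : E3 → E3 := ↑(chartAt E3 y) ∘ ↑(chartAt E3 x0).symm with hψ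
  have hz : (chartAt E3 y).symm (ψ q) = (chartAt E3 x0).symm q :=
    (chartAt E3 y).left_inv hq2
  ext v
  have h1 := mfderiv_symm_chain_apply x0 y hq1 hq2 v
  simp only [chartRep, ContinuousLinearMap.comp_apply, ContinuousLinearMap.coe_comp',
    Function.comp_apply]
  rw [hz]
  rw [← hψ] at h1
  exact congrArg _ h1

def ddf (F : E3 → E3 →L[ℝ] ℝ) (p v w : E3) : ℝ :=
  fderiv ℝ (fun q => F q w) p v - fderiv ℝ (fun q => F q v) p w

lemma fderiv_applied {G H : Type*} [NormedAddCommGroup G] [NormedSpace ℝ G]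
    [NormedAddCommGroup H] [NormedSpace ℝ H] {F : E3 → G →L[ℝ] H} {p : E3}
    (hF : DifferentiableAt ℝ F p) (w : G) :
    fderiv ℝ (fun q => F q w) p = (fderiv ℝ F p).flip w := by
  rw [fderiv_clm_apply hF (differentiableAt_const w)]
  simp

lemma ddf_eq_fderiv {η : E3 → E3 →L[ℝ] ℝ} {p : E3} (hη : DifferentiableAt ℝ η p) (a b : E3) :
    ddf η p a b = fderiv ℝ η p a b - fderiv ℝ η p b a := by
  unfold ddf
  rw [fderiv_applied hη a, fderiv_applied hη b]
  rfl

lemma ddf_pullback {ψ : E3 → E3} {η : E3 → E3 →L[ℝ] ℝ} {p0 : E3}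
    (hψ : ContDiffAt ℝ (⊤ : ℕ∞) ψ p0) (hη : ContDiffAt ℝ (⊤ : ℕ∞) η (ψ p0)) (v w : E3) :
    ddf (fun p => (η (ψ p)).comp (fderiv ℝ ψ p)) p0 v w
      = ddf η (ψ p0) (fderiv ℝ ψ p0 v) (fderiv ℝ ψ p0 w) := by
  have one_le : (1 : WithTop ℕ∞) ≤ (⊤ : ℕ∞) := by exact_mod_cast le_top
  have two_le : (2 : WithTop ℕ∞) ≤ ((⊤ : ℕ∞) : WithTop ℕ∞) := two_le_winfty
  have hψd : DifferentiableAt ℝ ψ p0 := hψ.differentiableAt (by simp)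
  have hηd : DifferentiableAt ℝ η (ψ p0) := hη.differentiableAt (by simp)
  have hc : DifferentiableAt ℝ (fun p => η (ψ p)) p0 := hηd.comp p0 hψd
  have hfd : DifferentiableAt ℝ (fderiv ℝ ψ) p0 :=
    (hψ.fderiv_right (m := 1) add_one_le_winfty).differentiableAt one_ne_zero
  have hu : ∀ w : E3, DifferentiableAt ℝ (fun p => fderiv ℝ ψ p w) p0 := fun w =>
    hfd.clm_apply (differentiableAt_const w)
  have hcfd : fderiv ℝ (fun p => η (ψ p)) p0 = (fderiv ℝ η (ψ p0)).comp (fderiv ℝ ψ p0) :=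
    fderiv_comp p0 hηd hψd
  have hufd : ∀ v w : E3, fderiv ℝ (fun p => fderiv ℝ ψ p w) p0 v
      = fderiv ℝ (fderiv ℝ ψ) p0 v w := by
    intro v w; rw [fderiv_applied hfd w]; rfl
  have hsymm : ∀ v w : E3, fderiv ℝ (fderiv ℝ ψ) p0 v w = fderiv ℝ (fderiv ℝ ψ) p0 w v :=
    fun v w => (hψ.isSymmSndFDerivAt (by simpa using two_le)) v w
  have key : ∀ v w : E3,
      fderiv ℝ (fun q => (η (ψ q)).comp (fderiv ℝ ψ q) w) p0 v
        = fderiv ℝ η (ψ p0) (fderiv ℝ ψ p0 v) (fderiv ℝ ψ p0 w)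
          + η (ψ p0) (fderiv ℝ (fderiv ℝ ψ) p0 v w) := by
    intro v w
    have : (fun q => (η (ψ q)).comp (fderiv ℝ ψ q) w)
        = fun q => (η (ψ q)) (fderiv ℝ ψ q w) := rfl
    rw [this, fderiv_clm_apply hc (hu w)]
    simp only [ContinuousLinearMap.add_apply, ContinuousLinearMap.comp_apply,
      ContinuousLinearMap.flip_apply]
    rw [hcfd]
    have := hufd v w
    simp only [ContinuousLinearMap.comp_apply]
    rw [this]
    ring
  rw [ddf_eq_fderiv hηd]
  unfold ddf
  rw [key v w, key w v, hsymm w v]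
  ring

lemma flat_dd {U : Set E3} (hU : IsOpen U) {u0 : E3} (h0 : u0 ∈ U)
    {F A B : E3 → E3 →L[ℝ] ℝ}
    (hF : ContDiffOn ℝ (⊤:ℕ∞) F U) (hA : ContDiffOn ℝ (⊤:ℕ∞) A U)
    (hB : ContDiffOn ℝ (⊤:ℕ∞) B U)
    (heq : ∀ p ∈ U, ∀ v w : E3, ddf F p v w = A p v * B p w - A p w * B p v) :
    ∀ u v w : E3,
      ddf A u0 v w * B u0 u - ddf A u0 u w * B u0 v + ddf A u0 u v * B u0 w
        - (A u0 u * ddf B u0 v w - A u0 v * ddf B u0 u w + A u0 w * ddf B u0 u v) = 0 := by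
  have hnhds : U ∈ nhds u0 := hU.mem_nhds h0
  have hFa : ContDiffAt ℝ (⊤:ℕ∞) F u0 := hF.contDiffAt hnhds
  have hAa : ContDiffAt ℝ (⊤:ℕ∞) A u0 := hA.contDiffAt hnhds
  have hBa : ContDiffAt ℝ (⊤:ℕ∞) B u0 := hB.contDiffAt hnhds
  have hFz : ∀ z : E3, ContDiffAt ℝ (⊤:ℕ∞) (fun q => F q z) u0 :=
    fun z => hFa.clm_apply contDiffAt_const
  have hfd : ∀ z : E3, DifferentiableAt ℝ (fderiv ℝ (fun q => F q z)) u0 :=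
    fun z => ((hFz z).fderiv_right (m := 1) add_one_le_winfty).differentiableAt one_ne_zero
  set H : E3 → E3 →L[ℝ] E3 →L[ℝ] ℝ := fun z => fderiv ℝ (fderiv ℝ (fun q => F q z)) u0 with hH
  have hsymm : ∀ z x y : E3, H z x y = H z y x :=
    fun z x y => ((hFz z).isSymmSndFDerivAt (by simpa using two_le_winfty)) x y
  have hAd : ∀ z : E3, DifferentiableAt ℝ (fun q => A q z) u0 :=
    fun z => ((hAa.differentiableAt (by simp)).clm_apply
      (differentiableAt_const z))
  have hBd : ∀ z : E3, DifferentiableAt ℝ (fun q => B q z) u0 :=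
    fun z => ((hBa.differentiableAt (by simp)).clm_apply
      (differentiableAt_const z))
  set A' : E3 → E3 → ℝ := fun x z => fderiv ℝ (fun q => A q z) u0 x with hA'
  set B' : E3 → E3 → ℝ := fun x z => fderiv ℝ (fun q => B q z) u0 x with hB'
  have hddfF : ∀ v w : E3, DifferentiableAt ℝ (fun q => fderiv ℝ (fun q' => F q' w) q v) u0 := by
    intro v w
    exact (hfd w).clm_apply (differentiableAt_const v)
  have hLHS : ∀ u v w : E3, fderiv ℝ (fun q => ddf F q v w) u0 u = H w u v - H v u w := by
    intro u v w
    have hsub : (fun q => ddf F q v w)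
        = fun q => fderiv ℝ (fun q' => F q' w) q v - fderiv ℝ (fun q' => F q' v) q w := rfl
    rw [hsub, fderiv_fun_sub (hddfF v w) (hddfF w v)]
    have e1 : fderiv ℝ (fun q => fderiv ℝ (fun q' => F q' w) q v) u0
        = (fderiv ℝ (fderiv ℝ (fun q' => F q' w)) u0).flip v := fderiv_applied (hfd w) v
    have e2 : fderiv ℝ (fun q => fderiv ℝ (fun q' => F q' v) q w) u0
        = (fderiv ℝ (fderiv ℝ (fun q' => F q' v)) u0).flip w := fderiv_applied (hfd v) w
    rw [ContinuousLinearMap.sub_apply, e1, e2]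
    rfl
  have hRHS : ∀ u v w : E3,
      fderiv ℝ (fun q => A q v * B q w - A q w * B q v) u0 u
        = A' u v * B u0 w + A u0 v * B' u w - (A' u w * B u0 v + A u0 w * B' u v) := by
    intro u v w
    rw [fderiv_fun_sub (f := fun q => A q v * B q w) (g := fun q => A q w * B q v)
        ((hAd v).mul (hBd w)) ((hAd w).mul (hBd v)),
      fderiv_fun_mul (hAd v) (hBd w), fderiv_fun_mul (hAd w) (hBd v)]
    simp only [ContinuousLinearMap.sub_apply, ContinuousLinearMap.add_apply,
      ContinuousLinearMap.smul_apply, smul_eq_mul]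
    ring
  have hcong : ∀ v w : E3, fderiv ℝ (fun q => ddf F q v w) u0
      = fderiv ℝ (fun q => A q v * B q w - A q w * B q v) u0 := by
    intro v w
    apply Filter.EventuallyEq.fderiv_eq
    filter_upwards [hnhds] with q hq
    exact heq q hq v w
  have hE : ∀ u v w : E3, H w u v - H v u w
      = A' u v * B u0 w + A u0 v * B' u w - (A' u w * B u0 v + A u0 w * B' u v) := by
    intro u v w
    rw [← hLHS u v w, hcong v w, hRHS u v w]
  have hddfA : ∀ x y : E3, ddf A u0 x y = A' x y - A' y x := fun x y => rfl
  have hddfB : ∀ x y : E3, ddf B u0 x y = B' x y - B' y x := fun x y => rfl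
  intro u v w
  have e1 := hE u v w
  have e2 := hE v u w
  have e3 := hE w u v
  have s1 := hsymm w u v
  have s2 := hsymm v u w
  have s3 := hsymm u v w
  rw [hddfA, hddfA, hddfA, hddfB, hddfB, hddfB]
  linarith [e1, e2, e3, s1, s2, s3]

lemma extd_eq_ddf (ω : S → E3 →L[ℝ] ℝ) (x : S) (v w : E3) :
    extd ω x v w = ddf (chartRep ω x) (chartAt E3 x x) v w := rfl

lemma transfer {ω A B : S → E3 →L[ℝ] ℝ} (hω : IsSmoothOneForm ω)
    (hstr : ∀ x : S, ∀ v w : E3, extd ω x v w = A x v * B x w - A x w * B x v) (x0 : S) :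
    ∀ p ∈ (chartAt E3 x0).target, ∀ v w : E3,
      ddf (chartRep ω x0) p v w
        = chartRep A x0 p v * chartRep B x0 p w
          - chartRep A x0 p w * chartRep B x0 p v := by
  intro p hp v w
  set y := (chartAt E3 x0).symm p with hy
  set ψ : E3 → E3 := ↑(chartAt E3 y) ∘ ↑(chartAt E3 x0).symm with hψ
  have hq2 : (chartAt E3 x0).symm p ∈ (chartAt E3 y).source := mem_chart_source E3 y
  have hψp : ψ p = chartAt E3 y y := rfl
  have hopen : IsOpen ((chartAt E3 x0).target ∩ ↑(chartAt E3 x0).symm ⁻¹' (chartAt E3 y).source) :=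
    (chartAt E3 x0).continuousOn_symm.isOpen_inter_preimage
      (chartAt E3 x0).open_target (chartAt E3 y).open_source
  have hev : chartRep ω x0
      =ᶠ[nhds p] (fun q => (chartRep ω y (ψ q)).comp (fderiv ℝ ψ q)) := by
    filter_upwards [hopen.mem_nhds ⟨hp, hq2⟩] with q hq
    exact chartRep_pullback ω x0 y hq.1 hq.2
  have hddf_eq : ddf (chartRep ω x0) p v w
      = ddf (fun q => (chartRep ω y (ψ q)).comp (fderiv ℝ ψ q)) p v w := by
    have hevw : (fun q => chartRep ω x0 q w)
        =ᶠ[nhds p] (fun q => ((chartRep ω y (ψ q)).comp (fderiv ℝ ψ q)) w) :=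
      hev.mono (fun q hq => by simp only [hq])
    have hevv : (fun q => chartRep ω x0 q v)
        =ᶠ[nhds p] (fun q => ((chartRep ω y (ψ q)).comp (fderiv ℝ ψ q)) v) :=
      hev.mono (fun q hq => by simp only [hq])
    unfold ddf
    rw [Filter.EventuallyEq.fderiv_eq hevw, Filter.EventuallyEq.fderiv_eq hevv]
  have hψc : ContDiffAt ℝ (⊤:ℕ∞) ψ p := psi_contDiffAt x0 y hp hq2
  have hηc : ContDiffAt ℝ (⊤:ℕ∞) (chartRep ω y) (ψ p) := by
    rw [hψp]
    exact ((hω y).of_le (by simp)).contDiffAt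
      ((chartAt E3 y).open_target.mem_nhds ((chartAt E3 y).map_source (mem_chart_source E3 y)))
  have hAB : ∀ (C : S → E3 →L[ℝ] ℝ) (z : E3),
      C y (fderiv ℝ ψ p z) = chartRep C x0 p z := by
    intro C z
    have h1 := chartRep_pullback C x0 y hp hq2
    rw [h1]
    simp only [ContinuousLinearMap.comp_apply]
    rw [show (↑(chartAt E3 y) ∘ ↑(chartAt E3 x0).symm) p = chartAt E3 y y from rfl,
      chartRep_center]
  rw [hddf_eq, ddf_pullback hψc hηc v w]
  have : ddf (chartRep ω y) (ψ p) (fderiv ℝ ψ p v) (fderiv ℝ ψ p w)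
      = extd ω y (fderiv ℝ ψ p v) (fderiv ℝ ψ p w) := by rw [hψp]; rfl
  rw [this, hstr y, hAB A v, hAB A w, hAB B v, hAB B w]

lemma smooth_combo {a b : S → E3 →L[ℝ] ℝ} (ha : IsSmoothOneForm a) (hb : IsSmoothOneForm b)
    (l1 l2 : ℝ) : IsSmoothOneForm (fun y => l1 • a y + l2 • b y) := by
  intro x
  have hrw : chartRep (fun y => l1 • a y + l2 • b y) x
      = fun u => l1 • chartRep a x u + l2 • chartRep b x u := by
    funext u
    unfold chartRep
    ext v
    rfl
  rw [hrw]
  exact ((ha x).const_smul l1).add ((hb x).const_smul l2)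

lemma diff_chartRep_apply {a : S → E3 →L[ℝ] ℝ} (ha : IsSmoothOneForm a) (x : S) (z : E3) :
    DifferentiableAt ℝ (fun u => chartRep a x u z) (chartAt E3 x x) := by
  have hmem : (chartAt E3 x).target ∈ nhds (chartAt E3 x x) :=
    (chartAt E3 x).open_target.mem_nhds ((chartAt E3 x).map_source (mem_chart_source E3 x))
  exact (((ha x).contDiffAt hmem).differentiableAt (by simp)).clm_apply (differentiableAt_const z)

lemma extd_combo {a b : S → E3 →L[ℝ] ℝ} (ha : IsSmoothOneForm a) (hb : IsSmoothOneForm b)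
    (l1 l2 : ℝ) (x : S) (v w : E3) :
    extd (fun y => l1 • a y + l2 • b y) x v w
      = l1 * extd a x v w + l2 * extd b x v w := by
  have hrw : ∀ z : E3, (fun u => chartRep (fun y => l1 • a y + l2 • b y) x u z)
      = fun u => l1 * chartRep a x u z + l2 * chartRep b x u z := by
    intro z; funext u
    unfold chartRep
    rfl
  unfold extd
  rw [hrw v, hrw w]
  rw [fderiv_fun_add ((diff_chartRep_apply ha x w).const_mul l1)
      ((diff_chartRep_apply hb x w).const_mul l2),
    fderiv_fun_add ((diff_chartRep_apply ha x v).const_mul l1)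
      ((diff_chartRep_apply hb x v).const_mul l2),
    fderiv_const_mul (diff_chartRep_apply ha x w) l1,
    fderiv_const_mul (diff_chartRep_apply hb x w) l2,
    fderiv_const_mul (diff_chartRep_apply ha x v) l1,
    fderiv_const_mul (diff_chartRep_apply hb x v) l2]
  simp only [ContinuousLinearMap.add_apply, ContinuousLinearMap.smul_apply, smul_eq_mul]
  ring

lemma wedge12_combo {a b : S → E3 →L[ℝ] ℝ} (ha : IsSmoothOneForm a) (hb : IsSmoothOneForm b)
    (l1 l2 : ℝ) (x : S) (u v w : E3) :
    wedge12 (fun y => l1 • a y + l2 • b y) (extd (fun y => l1 • a y + l2 • b y)) x u v w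
      = l1^2 * wedge12 a (extd a) x u v w
        + l1*l2*(wedge12 a (extd b) x u v w + wedge12 b (extd a) x u v w)
        + l2^2 * wedge12 b (extd b) x u v w := by
  unfold wedge12
  rw [extd_combo ha hb l1 l2 x v w, extd_combo ha hb l1 l2 x u w, extd_combo ha hb l1 l2 x u v]
  simp only [ContinuousLinearMap.add_apply, ContinuousLinearMap.smul_apply, smul_eq_mul]
  ring

end Aux

/-- For an `(I,J,K)`-generalized Finsler structure on a smooth 3-manifold:
(1) `(ω¹, ω²)` is a taut contact circle iff `I = 0`; in that case also `J = 0`.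
(2) `(ω¹, ω³)` is a taut contact circle iff `K = 1`; in that case `(ω¹, ω³)` is moreover a
Cartan structure. (3) `(ω², ω³)` is a taut contact circle iff `K = 1` and `J = 0`; in that
case also `I = 0`. -/
theorem gfs_taut_contact_circles {S : Type*} [TopologicalSpace S] [ChartedSpace E3 S]
    [IsManifold (𝓡 3) (⊤ : ℕ∞) S]
    (ω1 ω2 ω3 : S → E3 →L[ℝ] ℝ) (I J K : S → ℝ)
    (hGFS : IsGeneralizedFinslerStructure ω1 ω2 ω3 I J K) :
    (IsTautContactCircle ω1 ω2 ↔ ∀ x, I x = 0) ∧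
    (IsTautContactCircle ω1 ω2 → ∀ x, J x = 0) ∧
    (IsTautContactCircle ω1 ω3 ↔ ∀ x, K x = 1) ∧
    (IsTautContactCircle ω1 ω3 → IsCartanStructure ω1 ω3) ∧
    (IsTautContactCircle ω2 ω3 ↔ ((∀ x, K x = 1) ∧ (∀ x, J x = 0))) ∧
    (IsTautContactCircle ω2 ω3 → ∀ x, I x = 0) := by
  obtain ⟨hs1, hs2, hs3, hsI, hsJ, hsK, hli, hd1, hd2, hd3⟩ := hGFS
  have hw : ∀ x : S, ∃ u v w : E3,
      (ω1 x u = 1 ∧ ω2 x u = 0 ∧ ω3 x u = 0) ∧ (ω1 x v = 0 ∧ ω2 x v = 1 ∧ ω3 x v = 0)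
        ∧ (ω1 x w = 0 ∧ ω2 x w = 0 ∧ ω3 x w = 1) :=
    fun x => exists_dual_triple _ _ _ (hli x)
  -- wedge identities
  have h11 : ∀ x u v w, wedge12 ω1 (extd ω1) x u v w = wedge3 ω1 ω2 ω3 x u v w := by
    intro x u v w
    simp only [wedge12, wedge3]
    rw [hd1 x v w, hd1 x u w, hd1 x u v]
    simp only [wedge1]; ring
  have h22 : ∀ x u v w, wedge12 ω2 (extd ω2) x u v w = wedge3 ω1 ω2 ω3 x u v w := by
    intro x u v w
    simp only [wedge12, wedge3]
    rw [hd2 x v w, hd2 x u w, hd2 x u v]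
    simp only [wedge1]; ring
  have h33 : ∀ x u v w, wedge12 ω3 (extd ω3) x u v w = K x * wedge3 ω1 ω2 ω3 x u v w := by
    intro x u v w
    simp only [wedge12, wedge3]
    rw [hd3 x v w, hd3 x u w, hd3 x u v]
    simp only [wedge1]; ring
  have h12 : ∀ x u v w, wedge12 ω1 (extd ω2) x u v w = 0 := by
    intro x u v w
    simp only [wedge12]
    rw [hd2 x v w, hd2 x u w, hd2 x u v]
    simp only [wedge1]; ring
  have h21 : ∀ x u v w, wedge12 ω2 (extd ω1) x u v w = I x * wedge3 ω1 ω2 ω3 x u v w := by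
    intro x u v w
    simp only [wedge12, wedge3]
    rw [hd1 x v w, hd1 x u w, hd1 x u v]
    simp only [wedge1]; ring
  have h13 : ∀ x u v w, wedge12 ω1 (extd ω3) x u v w = 0 := by
    intro x u v w
    simp only [wedge12]
    rw [hd3 x v w, hd3 x u w, hd3 x u v]
    simp only [wedge1]; ring
  have h31 : ∀ x u v w, wedge12 ω3 (extd ω1) x u v w = 0 := by
    intro x u v w
    simp only [wedge12]
    rw [hd1 x v w, hd1 x u w, hd1 x u v]
    simp only [wedge1]; ring
  have h23 : ∀ x u v w, wedge12 ω2 (extd ω3) x u v w = J x * wedge3 ω1 ω2 ω3 x u v w := by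
    intro x u v w
    simp only [wedge12, wedge3]
    rw [hd3 x v w, hd3 x u w, hd3 x u v]
    simp only [wedge1]; ring
  have h32 : ∀ x u v w, wedge12 ω3 (extd ω2) x u v w = 0 := by
    intro x u v w
    simp only [wedge12]
    rw [hd2 x v w, hd2 x u w, hd2 x u v]
    simp only [wedge1]; ring
  have hvol1 : ∀ x : S, ∃ u v w : E3, wedge3 ω1 ω2 ω3 x u v w = 1 := by
    intro x
    obtain ⟨u, v, w, ⟨a1, a2, a3⟩, ⟨b1, b2, b3⟩, ⟨c1, c2, c3⟩⟩ := hw x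
    refine ⟨u, v, w, ?_⟩
    simp only [wedge3]
    rw [a1, a2, a3, b1, b2, b3, c1, c2, c3]; ring
  have hc1 : IsContactForm ω1 := by
    refine ⟨hs1, fun x => ?_⟩
    obtain ⟨u, v, w, hv⟩ := hvol1 x
    exact ⟨u, v, w, by rw [h11, hv]; norm_num⟩
  have hc2 : IsContactForm ω2 := by
    refine ⟨hs2, fun x => ?_⟩
    obtain ⟨u, v, w, hv⟩ := hvol1 x
    exact ⟨u, v, w, by rw [h22, hv]; norm_num⟩
  have hc3 : (∀ x, K x = 1) → IsContactForm ω3 := by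
    intro hK
    refine ⟨hs3, fun x => ?_⟩
    obtain ⟨u, v, w, hv⟩ := hvol1 x
    exact ⟨u, v, w, by rw [h33, hv, hK]; norm_num⟩
  -- the d² = 0 consequences
  have hJzero : (∀ x, I x = 0) → ∀ x0, J x0 = 0 := by
    intro hI x0
    have hstr1 : ∀ x : S, ∀ v w : E3,
        extd ω1 x v w = ω2 x v * ω3 x w - ω2 x w * ω3 x v := by
      intro x v w
      rw [hd1 x v w, hI x]
      simp only [wedge1]; ring
    have hmem : chartAt E3 x0 x0 ∈ (chartAt E3 x0).target :=
      (chartAt E3 x0).map_source (mem_chart_source E3 x0)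
    have hS := flat_dd (chartAt E3 x0).open_target hmem
      ((hs1 x0).of_le (by simp)) ((hs2 x0).of_le (by simp)) ((hs3 x0).of_le (by simp))
      (transfer hs1 hstr1 x0)
    obtain ⟨u, v, w, ⟨a1, a2, a3⟩, ⟨b1, b2, b3⟩, ⟨c1, c2, c3⟩⟩ := hw x0
    have hS' := hS u v w
    rw [← extd_eq_ddf ω2 x0 v w, ← extd_eq_ddf ω2 x0 u w, ← extd_eq_ddf ω2 x0 u v,
      ← extd_eq_ddf ω3 x0 v w, ← extd_eq_ddf ω3 x0 u w, ← extd_eq_ddf ω3 x0 u v,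
      chartRep_center ω2 x0, chartRep_center ω3 x0] at hS'
    rw [hd2 x0 v w, hd2 x0 u w, hd2 x0 u v, hd3 x0 v w, hd3 x0 u w, hd3 x0 u v] at hS'
    simp only [wedge1] at hS'
    rw [a1, a2, a3, b1, b2, b3, c1, c2, c3] at hS'
    nlinarith [hS']
  have hIzero : (∀ x, K x = 1) → (∀ x, J x = 0) → ∀ x0, I x0 = 0 := by
    intro hK hJ x0
    have hstr3 : ∀ x : S, ∀ v w : E3,
        extd ω3 x v w = ω1 x v * ω2 x w - ω1 x w * ω2 x v := by
      intro x v w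
      rw [hd3 x v w, hK x, hJ x]
      simp only [wedge1]; ring
    have hmem : chartAt E3 x0 x0 ∈ (chartAt E3 x0).target :=
      (chartAt E3 x0).map_source (mem_chart_source E3 x0)
    have hS := flat_dd (chartAt E3 x0).open_target hmem
      ((hs3 x0).of_le (by simp)) ((hs1 x0).of_le (by simp)) ((hs2 x0).of_le (by simp))
      (transfer hs3 hstr3 x0)
    obtain ⟨u, v, w, ⟨a1, a2, a3⟩, ⟨b1, b2, b3⟩, ⟨c1, c2, c3⟩⟩ := hw x0
    have hS' := hS u v w
    rw [← extd_eq_ddf ω1 x0 v w, ← extd_eq_ddf ω1 x0 u w, ← extd_eq_ddf ω1 x0 u v,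
      ← extd_eq_ddf ω2 x0 v w, ← extd_eq_ddf ω2 x0 u w, ← extd_eq_ddf ω2 x0 u v,
      chartRep_center ω1 x0, chartRep_center ω2 x0] at hS'
    rw [hd1 x0 v w, hd1 x0 u w, hd1 x0 u v, hd2 x0 v w, hd2 x0 u w, hd2 x0 u v] at hS'
    simp only [wedge1] at hS'
    rw [a1, a2, a3, b1, b2, b3, c1, c2, c3] at hS'
    nlinarith [hS']
  -- pair (ω1, ω2)
  have pair12 : IsTautContactCircle ω1 ω2 ↔ ∀ x, I x = 0 := by
    constructor
    · intro ht x
      obtain ⟨u, v, w, hv⟩ := hvol1 x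
      have h := (ht.2.2 (3/5) (4/5) (by norm_num)).2 x u v w
      rw [wedge12_combo hs1 hs2 (3/5) (4/5) x u v w, h11, h22, h12, h21, hv] at h
      nlinarith [h]
    · intro hI
      refine ⟨hc1, hc2, fun l1 l2 hl => ⟨⟨smooth_combo hs1 hs2 l1 l2, fun x => ?_⟩,
        fun x u v w => ?_⟩⟩
      · obtain ⟨u, v, w, hv⟩ := hvol1 x
        refine ⟨u, v, w, ?_⟩
        rw [wedge12_combo hs1 hs2 l1 l2 x u v w, h11, h22, h12, h21, hI, hv]
        nlinarith [hl]
      · rw [wedge12_combo hs1 hs2 l1 l2 x u v w, h11, h22, h12, h21, hI]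
        linear_combination (wedge3 ω1 ω2 ω3 x u v w) * hl
  -- pair (ω1, ω3)
  have pair13 : IsTautContactCircle ω1 ω3 ↔ ∀ x, K x = 1 := by
    constructor
    · intro ht x
      obtain ⟨u, v, w, hv⟩ := hvol1 x
      have h := (ht.2.2 0 1 (by norm_num)).2 x u v w
      rw [wedge12_combo hs1 hs3 0 1 x u v w, h11, h33, h13, h31, hv] at h
      nlinarith [h]
    · intro hK
      refine ⟨hc1, hc3 hK, fun l1 l2 hl => ⟨⟨smooth_combo hs1 hs3 l1 l2, fun x => ?_⟩,
        fun x u v w => ?_⟩⟩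
      · obtain ⟨u, v, w, hv⟩ := hvol1 x
        refine ⟨u, v, w, ?_⟩
        rw [wedge12_combo hs1 hs3 l1 l2 x u v w, h11, h33, h13, h31, hK, hv]
        nlinarith [hl]
      · rw [wedge12_combo hs1 hs3 l1 l2 x u v w, h11, h33, h13, h31, hK]
        linear_combination (wedge3 ω1 ω2 ω3 x u v w) * hl
  -- pair (ω2, ω3)
  have pair23 : IsTautContactCircle ω2 ω3 ↔ ((∀ x, K x = 1) ∧ (∀ x, J x = 0)) := by
    constructor
    · intro ht
      have hK : ∀ x, K x = 1 := by
        intro x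
        obtain ⟨u, v, w, hv⟩ := hvol1 x
        have h := (ht.2.2 0 1 (by norm_num)).2 x u v w
        rw [wedge12_combo hs2 hs3 0 1 x u v w, h22, h33, h23, h32, hv] at h
        nlinarith [h]
      refine ⟨hK, fun x => ?_⟩
      obtain ⟨u, v, w, hv⟩ := hvol1 x
      have h := (ht.2.2 (3/5) (4/5) (by norm_num)).2 x u v w
      rw [wedge12_combo hs2 hs3 (3/5) (4/5) x u v w, h22, h33, h23, h32, hv, hK x] at h
      nlinarith [h]
    · rintro ⟨hK, hJ⟩
      refine ⟨hc2, hc3 hK, fun l1 l2 hl => ⟨⟨smooth_combo hs2 hs3 l1 l2, fun x => ?_⟩,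
        fun x u v w => ?_⟩⟩
      · obtain ⟨u, v, w, hv⟩ := hvol1 x
        refine ⟨u, v, w, ?_⟩
        rw [wedge12_combo hs2 hs3 l1 l2 x u v w, h22, h33, h23, h32, hK, hJ, hv]
        nlinarith [hl]
      · rw [wedge12_combo hs2 hs3 l1 l2 x u v w, h22, h33, h23, h32, hK, hJ]
        linear_combination (wedge3 ω1 ω2 ω3 x u v w) * hl
  refine ⟨pair12, fun ht => hJzero (pair12.mp ht), pair13, ?_, pair23,
    fun ht => hIzero (pair23.mp ht).1 (pair23.mp ht).2⟩
  intro ht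
  have hK := pair13.mp ht
  exact ⟨hc1, hc3 hK, fun x u v w => by rw [h11, h33, hK x, one_mul],
    fun x u v w => h13 x u v w, fun x u v w => h31 x u v w⟩

end
end

section
/- On the open set V = {(a₁, b₀, b₁) ∈ ℝ³ : a₁² + b₀² + b₁² < 1 and a₀b₁ − a₁b₀ ≠ 0}, where a₀ := √(1 − a₁² − b₀² − b₁²), every function of the form f(a₁, b₀, b₁) = Φ(b₀² + b₁², arctan((a₀b₀ + a₁b₁)/(a₀b₁ − a₁b₀))), with Φ : ℝ² → ℝ smooth, satisfies the linear partial differential equation a₀·∂f/∂a₁ − b₁·∂f/∂b₀ + b₀·∂f/∂b₁ = 0. -/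
noncomputable section

/-- The function `a₀ = √(1 − a₁² − b₀² − b₁²)`. -/
def a0 (p : E3) : ℝ := Real.sqrt (1 - (p 0) ^ 2 - (p 1) ^ 2 - (p 2) ^ 2)

set_option maxHeartbeats 4000000 in
/-- On the open set
`V = {(a₁,b₀,b₁) : a₁² + b₀² + b₁² < 1, a₀b₁ − a₁b₀ ≠ 0}`, every function of the form
`f(a₁,b₀,b₁) = Φ(b₀² + b₁², arctan((a₀b₀ + a₁b₁)/(a₀b₁ − a₁b₀)))` with `Φ : ℝ² → ℝ` smooth
satisfies the PDE `a₀·∂f/∂a₁ − b₁·∂f/∂b₀ + b₀·∂f/∂b₁ = 0`. -/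
theorem su2_invariant_solutions (Φ : ℝ × ℝ → ℝ) (hΦ : ContDiff ℝ (⊤ : ℕ∞) Φ) :
    ∀ p : E3, (p 0) ^ 2 + (p 1) ^ 2 + (p 2) ^ 2 < 1 →
      a0 p * p 2 - p 0 * p 1 ≠ 0 →
      (letI f : E3 → ℝ := fun q => Φ ((q 1) ^ 2 + (q 2) ^ 2,
          Real.arctan ((a0 q * q 1 + q 0 * q 2) / (a0 q * q 2 - q 0 * q 1)))
       a0 p * fderiv ℝ f p (EuclideanSpace.single (0 : Fin 3) 1)
         - p 2 * fderiv ℝ f p (EuclideanSpace.single (1 : Fin 3) 1)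
         + p 1 * fderiv ℝ f p (EuclideanSpace.single (2 : Fin 3) 1) = 0) := by
  intro p hp hv
  have hc : ∀ i : Fin 3, HasFDerivAt (fun q : E3 => q i)
      (PiLp.proj 2 (fun _ : Fin 3 => ℝ) i : E3 →L[ℝ] ℝ) p :=
    fun i => (PiLp.proj 2 (fun _ : Fin 3 => ℝ) i : E3 →L[ℝ] ℝ).hasFDerivAt
  have hspos : 0 < 1 - (p 0) ^ 2 - (p 1) ^ 2 - (p 2) ^ 2 := by linarith
  have hA0pos : 0 < a0 p := Real.sqrt_pos.mpr hspos
  have hA0sq : (a0 p) ^ 2 = 1 - (p 0) ^ 2 - (p 1) ^ 2 - (p 2) ^ 2 := Real.sq_sqrt hspos.le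
  -- derivative of s
  have hs : HasFDerivAt (fun q : E3 => 1 - (q 0) ^ 2 - (q 1) ^ 2 - (q 2) ^ 2)
      ((((0 : E3 →L[ℝ] ℝ)
        - ((p 0) • (PiLp.proj 2 (fun _ : Fin 3 => ℝ) 0 : E3 →L[ℝ] ℝ)
            + (p 0) • (PiLp.proj 2 (fun _ : Fin 3 => ℝ) 0 : E3 →L[ℝ] ℝ)))
        - ((p 1) • (PiLp.proj 2 (fun _ : Fin 3 => ℝ) 1 : E3 →L[ℝ] ℝ)
            + (p 1) • (PiLp.proj 2 (fun _ : Fin 3 => ℝ) 1 : E3 →L[ℝ] ℝ)))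
        - ((p 2) • (PiLp.proj 2 (fun _ : Fin 3 => ℝ) 2 : E3 →L[ℝ] ℝ)
            + (p 2) • (PiLp.proj 2 (fun _ : Fin 3 => ℝ) 2 : E3 →L[ℝ] ℝ))) p := by
    have h := (((hasFDerivAt_const (1:ℝ) p).sub ((hc 0).mul (hc 0))).sub
      ((hc 1).mul (hc 1))).sub ((hc 2).mul (hc 2))
    exact h.congr_of_eventuallyEq (Filter.Eventually.of_forall fun q => by simp [pow_two])
  have hsp : (1 : ℝ) - (p 0) ^ 2 - (p 1) ^ 2 - (p 2) ^ 2 ≠ 0 := ne_of_gt hspos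
  have ha0 : HasFDerivAt a0
      ((1 / (2 * a0 p)) • ((((0 : E3 →L[ℝ] ℝ)
        - ((p 0) • (PiLp.proj 2 (fun _ : Fin 3 => ℝ) 0 : E3 →L[ℝ] ℝ)
            + (p 0) • (PiLp.proj 2 (fun _ : Fin 3 => ℝ) 0 : E3 →L[ℝ] ℝ)))
        - ((p 1) • (PiLp.proj 2 (fun _ : Fin 3 => ℝ) 1 : E3 →L[ℝ] ℝ)
            + (p 1) • (PiLp.proj 2 (fun _ : Fin 3 => ℝ) 1 : E3 →L[ℝ] ℝ)))
        - ((p 2) • (PiLp.proj 2 (fun _ : Fin 3 => ℝ) 2 : E3 →L[ℝ] ℝ)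
            + (p 2) • (PiLp.proj 2 (fun _ : Fin 3 => ℝ) 2 : E3 →L[ℝ] ℝ)))) p :=
    (Real.hasDerivAt_sqrt hsp).comp_hasFDerivAt p hs
  have hu := (ha0.mul (hc 1)).add ((hc 0).mul (hc 2))
  have hv' := (ha0.mul (hc 2)).sub ((hc 0).mul (hc 1))
  have hvne : a0 p * p 2 - p 0 * p 1 ≠ 0 := hv
  have hvinv := (hasDerivAt_inv hvne).comp_hasFDerivAt p hv'
  have hw := hu.mul hvinv
  simp only [Function.comp_def, ← div_eq_mul_inv] at hw
  have hθ := (Real.hasDerivAt_arctan _).comp_hasFDerivAt p hw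
  have hr : HasFDerivAt (fun q : E3 => (q 1) ^ 2 + (q 2) ^ 2)
      (((p 1) • (PiLp.proj 2 (fun _ : Fin 3 => ℝ) 1 : E3 →L[ℝ] ℝ)
          + (p 1) • (PiLp.proj 2 (fun _ : Fin 3 => ℝ) 1 : E3 →L[ℝ] ℝ))
        + ((p 2) • (PiLp.proj 2 (fun _ : Fin 3 => ℝ) 2 : E3 →L[ℝ] ℝ)
          + (p 2) • (PiLp.proj 2 (fun _ : Fin 3 => ℝ) 2 : E3 →L[ℝ] ℝ))) p := by
    have h := ((hc 1).mul (hc 1)).add ((hc 2).mul (hc 2))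
    exact h.congr_of_eventuallyEq (Filter.Eventually.of_forall fun q => by simp [pow_two])
  have hg := hr.prodMk hθ
  have hΦd := (hΦ.differentiable (by simp) (((p 1) ^ 2 + (p 2) ^ 2,
      Real.arctan ((a0 p * p 1 + p 0 * p 2) / (a0 p * p 2 - p 0 * p 1))) : ℝ × ℝ)).hasFDerivAt
  have hf0 := hΦd.comp p hg
  have hf : HasFDerivAt
      (fun q : E3 => Φ ((q 1) ^ 2 + (q 2) ^ 2,
        Real.arctan ((a0 q * q 1 + q 0 * q 2) / (a0 q * q 2 - q 0 * q 1)))) _ p := hf0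
  rw [hf.fderiv]
  have comb : ∀ (T : ℝ × ℝ →L[ℝ] ℝ) (v1 v2 v3 : ℝ × ℝ),
      a0 p • v1 - p 2 • v2 + p 1 • v3 = 0 →
      a0 p * T v1 - p 2 * T v2 + p 1 * T v3 = 0 := by
    intro T v1 v2 v3 h
    have := congrArg T h
    simpa [map_add, map_sub, map_smul, smul_eq_mul] using this
  simp only [ContinuousLinearMap.coe_comp', Function.comp_apply,
    ContinuousLinearMap.add_apply, ContinuousLinearMap.sub_apply,
    ContinuousLinearMap.smul_apply, ContinuousLinearMap.prod_apply,
    ContinuousLinearMap.zero_apply, PiLp.proj_apply, EuclideanSpace.single_apply,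
    smul_eq_mul, show ((0:Fin 3) = 1) = False by simp, show ((0:Fin 3) = 2) = False by simp,
    show ((1:Fin 3) = 0) = False by simp, show ((1:Fin 3) = 2) = False by simp,
    show ((2:Fin 3) = 0) = False by simp, show ((2:Fin 3) = 1) = False by simp,
    if_true, if_false, mul_zero, zero_mul, mul_one, one_mul, add_zero, zero_add,
    sub_zero, zero_sub, neg_zero]
  refine comb _ _ _ _ ?_
  have h1 : a0 p ≠ 0 := ne_of_gt hA0pos
  have h2 : (1 : ℝ) + ((a0 p * p 1 + p 0 * p 2) / (a0 p * p 2 - p 0 * p 1)) ^ 2 ≠ 0 := by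
    positivity
  simp only [Prod.smul_mk, Prod.mk_add_mk, Prod.mk_sub_mk, Prod.mk_eq_zero, smul_eq_mul]
  constructor
  · ring
  · simp only [Pi.mul_apply, Pi.add_apply, Pi.sub_apply, ContinuousLinearMap.neg_apply,
      ContinuousLinearMap.add_apply, ContinuousLinearMap.smul_apply, PiLp.proj_apply,
      EuclideanSpace.single_apply, smul_eq_mul]
    field_simp
    simp only [Fin.reduceEq, if_false, reduceIte, mul_zero, zero_mul, add_zero, zero_add,
      neg_zero, sub_zero]
    ring_nf

end
end
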